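/- On ℝ⁸_{>0} with coordinates X = (X₁,…,X₈) = (σ₁,…,σ₆,τ₁,τ₂), define the Poisson bracket of smooth functions f, g by {f,g} = Σ_{i,j=1}^{8} 2ε_{ij} X_i X_j (∂f/∂X_i)(∂g/∂X_j), where ε is the antisymmetric 8×8 matrix with ε_{i7} = (−1)^{i+1}, ε_{i8} = (−1)^{i} for 1 ≤ i ≤ 6, ε_{7i} = −ε_{i7}, ε_{8i} = −ε_{i8}, and all other entries zero. Then each of the six functions σ₁σ₄, τ₁τ₂/(σ₂σ₃), σ₃σ₆, τ₁τ₂/(σ₄σ₅), σ₂σ₅, τ₁τ₂/(σ₁σ₆) is a Casimir function: its bracket with every smooth function g vanishes identically. -/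

import Mathlib

private lemma fd_mul (a b : Fin 8) (X v : Fin 8 → ℝ) :
    fderiv ℝ (fun Y : Fin 8 → ℝ => Y a * Y b) X v = v a * X b + X a * v b := by
  have ha : HasFDerivAt (fun Y : Fin 8 → ℝ => Y a)
      (ContinuousLinearMap.proj (R := ℝ) (φ := fun _ : Fin 8 => ℝ) a) X :=
    hasFDerivAt_apply a X
  have hb : HasFDerivAt (fun Y : Fin 8 → ℝ => Y b)
      (ContinuousLinearMap.proj (R := ℝ) (φ := fun _ : Fin 8 => ℝ) b) X :=
    hasFDerivAt_apply b X
  rw [show (fun Y : Fin 8 → ℝ => Y a * Y b) = (fun Y => Y a) * (fun Y => Y b) from rfl, (ha.mul hb).fderiv]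
  simp [ContinuousLinearMap.proj_apply]
  ring

private lemma fd_div (a b : Fin 8) (X : Fin 8 → ℝ) (ha0 : X a ≠ 0) (hb0 : X b ≠ 0)
    (v : Fin 8 → ℝ) :
    fderiv ℝ (fun Y : Fin 8 → ℝ => Y 6 * Y 7 / (Y a * Y b)) X v =
      ((v 6 * X 7 + X 6 * v 7) * (X a * X b)
        - X 6 * X 7 * (v a * X b + X a * v b)) / (X a * X b) ^ 2 := by
  have p : ∀ c : Fin 8, HasFDerivAt (fun Y : Fin 8 → ℝ => Y c)
      (ContinuousLinearMap.proj (R := ℝ) (φ := fun _ : Fin 8 => ℝ) c) X :=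
    fun c => hasFDerivAt_apply c X
  have hn := (p 6).mul (p 7)
  have hd := (p a).mul (p b)
  have hne : X a * X b ≠ 0 := mul_ne_zero ha0 hb0
  have hinv : HasDerivAt (fun y : ℝ => y⁻¹) (-((X a * X b) ^ 2)⁻¹) (X a * X b) :=
    hasDerivAt_inv hne
  have hinvc := hinv.comp_hasFDerivAt X hd
  have h := hn.mul hinvc
  simp only [Function.comp_def] at h
  have heq : (fun Y : Fin 8 → ℝ => Y 6 * Y 7 / (Y a * Y b))
      = fun Y : Fin 8 → ℝ => Y 6 * Y 7 * (Y a * Y b)⁻¹ :=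
    funext fun Y => div_eq_mul_inv _ _
  rw [heq, show (fun Y : Fin 8 → ℝ => Y 6 * Y 7 * (Y a * Y b)⁻¹) = ((fun Y : Fin 8 → ℝ => Y 6) * fun Y : Fin 8 → ℝ => Y 7) * fun x => (((fun Y : Fin 8 → ℝ => Y a) * fun Y : Fin 8 → ℝ => Y b) x)⁻¹ from rfl, h.fderiv]
  simp [ContinuousLinearMap.proj_apply]
  field_simp
  ring


/-- The matrix ε of the Fock–Goncharov Poisson structure for the pair of pants,
with 0-indexed coordinates (X₀,…,X₇) = (σ₁,…,σ₆,τ₁,τ₂):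
ε_{i,6} = (−1)^i and ε_{i,7} = (−1)^{i+1} for 0 ≤ i ≤ 5 (which in 1-indexed
notation reads ε_{i7} = (−1)^{i+1}, ε_{i8} = (−1)^i for 1 ≤ i ≤ 6),
extended antisymmetrically, all other entries zero. -/
def fgEps (i j : Fin 8) : ℝ :=
  if i.val ≤ 5 ∧ j.val = 6 then (-1 : ℝ) ^ i.val
  else if i.val ≤ 5 ∧ j.val = 7 then (-1 : ℝ) ^ (i.val + 1)
  else if i.val = 6 ∧ j.val ≤ 5 then -((-1 : ℝ) ^ j.val)
  else if i.val = 7 ∧ j.val ≤ 5 then -((-1 : ℝ) ^ (j.val + 1))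
  else 0

private lemma fv0 : ((0:Fin 8)).val = 0 := rfl
private lemma fv1 : ((1:Fin 8)).val = 1 := rfl
private lemma fv2 : ((2:Fin 8)).val = 2 := rfl
private lemma fv3 : ((3:Fin 8)).val = 3 := rfl
private lemma fv4 : ((4:Fin 8)).val = 4 := rfl
private lemma fv5 : ((5:Fin 8)).val = 5 := rfl
private lemma fv6 : ((6:Fin 8)).val = 6 := rfl
private lemma fv7 : ((7:Fin 8)).val = 7 := rfl

private lemma fgEps_0_0 : fgEps 0 0 = 0 := by norm_num [fgEps, fv0, fv0]
private lemma fgEps_0_1 : fgEps 0 1 = 0 := by norm_num [fgEps, fv0, fv1]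
private lemma fgEps_0_2 : fgEps 0 2 = 0 := by norm_num [fgEps, fv0, fv2]
private lemma fgEps_0_3 : fgEps 0 3 = 0 := by norm_num [fgEps, fv0, fv3]
private lemma fgEps_0_4 : fgEps 0 4 = 0 := by norm_num [fgEps, fv0, fv4]
private lemma fgEps_0_5 : fgEps 0 5 = 0 := by norm_num [fgEps, fv0, fv5]
private lemma fgEps_0_6 : fgEps 0 6 = 1 := by norm_num [fgEps, fv0, fv6]
private lemma fgEps_0_7 : fgEps 0 7 = -1 := by norm_num [fgEps, fv0, fv7]
private lemma fgEps_1_0 : fgEps 1 0 = 0 := by norm_num [fgEps, fv1, fv0]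
private lemma fgEps_1_1 : fgEps 1 1 = 0 := by norm_num [fgEps, fv1, fv1]
private lemma fgEps_1_2 : fgEps 1 2 = 0 := by norm_num [fgEps, fv1, fv2]
private lemma fgEps_1_3 : fgEps 1 3 = 0 := by norm_num [fgEps, fv1, fv3]
private lemma fgEps_1_4 : fgEps 1 4 = 0 := by norm_num [fgEps, fv1, fv4]
private lemma fgEps_1_5 : fgEps 1 5 = 0 := by norm_num [fgEps, fv1, fv5]
private lemma fgEps_1_6 : fgEps 1 6 = -1 := by norm_num [fgEps, fv1, fv6]
private lemma fgEps_1_7 : fgEps 1 7 = 1 := by norm_num [fgEps, fv1, fv7]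
private lemma fgEps_2_0 : fgEps 2 0 = 0 := by norm_num [fgEps, fv2, fv0]
private lemma fgEps_2_1 : fgEps 2 1 = 0 := by norm_num [fgEps, fv2, fv1]
private lemma fgEps_2_2 : fgEps 2 2 = 0 := by norm_num [fgEps, fv2, fv2]
private lemma fgEps_2_3 : fgEps 2 3 = 0 := by norm_num [fgEps, fv2, fv3]
private lemma fgEps_2_4 : fgEps 2 4 = 0 := by norm_num [fgEps, fv2, fv4]
private lemma fgEps_2_5 : fgEps 2 5 = 0 := by norm_num [fgEps, fv2, fv5]
private lemma fgEps_2_6 : fgEps 2 6 = 1 := by norm_num [fgEps, fv2, fv6]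
private lemma fgEps_2_7 : fgEps 2 7 = -1 := by norm_num [fgEps, fv2, fv7]
private lemma fgEps_3_0 : fgEps 3 0 = 0 := by norm_num [fgEps, fv3, fv0]
private lemma fgEps_3_1 : fgEps 3 1 = 0 := by norm_num [fgEps, fv3, fv1]
private lemma fgEps_3_2 : fgEps 3 2 = 0 := by norm_num [fgEps, fv3, fv2]
private lemma fgEps_3_3 : fgEps 3 3 = 0 := by norm_num [fgEps, fv3, fv3]
private lemma fgEps_3_4 : fgEps 3 4 = 0 := by norm_num [fgEps, fv3, fv4]
private lemma fgEps_3_5 : fgEps 3 5 = 0 := by norm_num [fgEps, fv3, fv5]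
private lemma fgEps_3_6 : fgEps 3 6 = -1 := by norm_num [fgEps, fv3, fv6]
private lemma fgEps_3_7 : fgEps 3 7 = 1 := by norm_num [fgEps, fv3, fv7]
private lemma fgEps_4_0 : fgEps 4 0 = 0 := by norm_num [fgEps, fv4, fv0]
private lemma fgEps_4_1 : fgEps 4 1 = 0 := by norm_num [fgEps, fv4, fv1]
private lemma fgEps_4_2 : fgEps 4 2 = 0 := by norm_num [fgEps, fv4, fv2]
private lemma fgEps_4_3 : fgEps 4 3 = 0 := by norm_num [fgEps, fv4, fv3]
private lemma fgEps_4_4 : fgEps 4 4 = 0 := by norm_num [fgEps, fv4, fv4]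
private lemma fgEps_4_5 : fgEps 4 5 = 0 := by norm_num [fgEps, fv4, fv5]
private lemma fgEps_4_6 : fgEps 4 6 = 1 := by norm_num [fgEps, fv4, fv6]
private lemma fgEps_4_7 : fgEps 4 7 = -1 := by norm_num [fgEps, fv4, fv7]
private lemma fgEps_5_0 : fgEps 5 0 = 0 := by norm_num [fgEps, fv5, fv0]
private lemma fgEps_5_1 : fgEps 5 1 = 0 := by norm_num [fgEps, fv5, fv1]
private lemma fgEps_5_2 : fgEps 5 2 = 0 := by norm_num [fgEps, fv5, fv2]
private lemma fgEps_5_3 : fgEps 5 3 = 0 := by norm_num [fgEps, fv5, fv3]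
private lemma fgEps_5_4 : fgEps 5 4 = 0 := by norm_num [fgEps, fv5, fv4]
private lemma fgEps_5_5 : fgEps 5 5 = 0 := by norm_num [fgEps, fv5, fv5]
private lemma fgEps_5_6 : fgEps 5 6 = -1 := by norm_num [fgEps, fv5, fv6]
private lemma fgEps_5_7 : fgEps 5 7 = 1 := by norm_num [fgEps, fv5, fv7]
private lemma fgEps_6_0 : fgEps 6 0 = -1 := by norm_num [fgEps, fv6, fv0]
private lemma fgEps_6_1 : fgEps 6 1 = 1 := by norm_num [fgEps, fv6, fv1]
private lemma fgEps_6_2 : fgEps 6 2 = -1 := by norm_num [fgEps, fv6, fv2]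
private lemma fgEps_6_3 : fgEps 6 3 = 1 := by norm_num [fgEps, fv6, fv3]
private lemma fgEps_6_4 : fgEps 6 4 = -1 := by norm_num [fgEps, fv6, fv4]
private lemma fgEps_6_5 : fgEps 6 5 = 1 := by norm_num [fgEps, fv6, fv5]
private lemma fgEps_6_6 : fgEps 6 6 = 0 := by norm_num [fgEps, fv6, fv6]
private lemma fgEps_6_7 : fgEps 6 7 = 0 := by norm_num [fgEps, fv6, fv7]
private lemma fgEps_7_0 : fgEps 7 0 = 1 := by norm_num [fgEps, fv7, fv0]
private lemma fgEps_7_1 : fgEps 7 1 = -1 := by norm_num [fgEps, fv7, fv1]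
private lemma fgEps_7_2 : fgEps 7 2 = 1 := by norm_num [fgEps, fv7, fv2]
private lemma fgEps_7_3 : fgEps 7 3 = -1 := by norm_num [fgEps, fv7, fv3]
private lemma fgEps_7_4 : fgEps 7 4 = 1 := by norm_num [fgEps, fv7, fv4]
private lemma fgEps_7_5 : fgEps 7 5 = -1 := by norm_num [fgEps, fv7, fv5]
private lemma fgEps_7_6 : fgEps 7 6 = 0 := by norm_num [fgEps, fv7, fv6]
private lemma fgEps_7_7 : fgEps 7 7 = 0 := by norm_num [fgEps, fv7, fv7]

/-- The Fock–Goncharov Poisson bracket {f,g}(X) = Σ 2 ε_{ij} X_i X_j ∂_i f ∂_j g. -/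
noncomputable def fgBracket (f g : (Fin 8 → ℝ) → ℝ) (X : Fin 8 → ℝ) : ℝ :=
  ∑ i : Fin 8, ∑ j : Fin 8,
    2 * fgEps i j * X i * X j *
      (fderiv ℝ f X (Pi.single i 1)) * (fderiv ℝ g X (Pi.single j 1))

set_option maxHeartbeats 4000000 in
/-- The six functions σ₁σ₄, τ₁τ₂/(σ₂σ₃), σ₃σ₆, τ₁τ₂/(σ₄σ₅), σ₂σ₅, τ₁τ₂/(σ₁σ₆)
are Casimir functions of the Fock–Goncharov Poisson structure: their bracket
with every smooth function vanishes on the positive octant. -/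
theorem fg_casimirs (g : (Fin 8 → ℝ) → ℝ) (hg : ContDiff ℝ (⊤ : ℕ∞) g)
    (X : Fin 8 → ℝ) (hX : ∀ i, 0 < X i) :
    fgBracket (fun Y => Y 0 * Y 3) g X = 0 ∧
    fgBracket (fun Y => Y 6 * Y 7 / (Y 1 * Y 2)) g X = 0 ∧
    fgBracket (fun Y => Y 2 * Y 5) g X = 0 ∧
    fgBracket (fun Y => Y 6 * Y 7 / (Y 3 * Y 4)) g X = 0 ∧
    fgBracket (fun Y => Y 1 * Y 4) g X = 0 ∧
    fgBracket (fun Y => Y 6 * Y 7 / (Y 0 * Y 5)) g X = 0 := by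
  have hne : ∀ i, X i ≠ 0 := fun i => (hX i).ne'
  refine ⟨?_, ?_, ?_, ?_, ?_, ?_⟩
  · unfold fgBracket
    simp only [Fin.sum_univ_eight, fgEps_0_0, fgEps_0_1, fgEps_0_2, fgEps_0_3, fgEps_0_4, fgEps_0_5, fgEps_0_6, fgEps_0_7, fgEps_1_0, fgEps_1_1, fgEps_1_2, fgEps_1_3, fgEps_1_4, fgEps_1_5, fgEps_1_6, fgEps_1_7, fgEps_2_0, fgEps_2_1, fgEps_2_2, fgEps_2_3, fgEps_2_4, fgEps_2_5, fgEps_2_6, fgEps_2_7, fgEps_3_0, fgEps_3_1, fgEps_3_2, fgEps_3_3, fgEps_3_4, fgEps_3_5, fgEps_3_6, fgEps_3_7, fgEps_4_0, fgEps_4_1, fgEps_4_2, fgEps_4_3, fgEps_4_4, fgEps_4_5, fgEps_4_6, fgEps_4_7, fgEps_5_0, fgEps_5_1, fgEps_5_2, fgEps_5_3, fgEps_5_4, fgEps_5_5, fgEps_5_6, fgEps_5_7, fgEps_6_0, fgEps_6_1, fgEps_6_2, fgEps_6_3, fgEps_6_4, fgEps_6_5, fgEps_6_6, fgEps_6_7,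 fgEps_7_0, fgEps_7_1, fgEps_7_2, fgEps_7_3, fgEps_7_4, fgEps_7_5, fgEps_7_6, fgEps_7_7, mul_zero, zero_mul, fd_mul, Pi.single_apply]
    simp
    ring
  · unfold fgBracket
    simp only [Fin.sum_univ_eight, fgEps_0_0, fgEps_0_1, fgEps_0_2, fgEps_0_3, fgEps_0_4, fgEps_0_5, fgEps_0_6, fgEps_0_7, fgEps_1_0, fgEps_1_1, fgEps_1_2, fgEps_1_3, fgEps_1_4, fgEps_1_5, fgEps_1_6, fgEps_1_7, fgEps_2_0, fgEps_2_1, fgEps_2_2, fgEps_2_3, fgEps_2_4, fgEps_2_5, fgEps_2_6, fgEps_2_7, fgEps_3_0, fgEps_3_1, fgEps_3_2, fgEps_3_3, fgEps_3_4, fgEps_3_5, fgEps_3_6, fgEps_3_7, fgEps_4_0, fgEps_4_1, fgEps_4_2, fgEps_4_3, fgEps_4_4, fgEps_4_5, fgEps_4_6, fgEps_4_7, fgEps_5_0, fgEps_5_1, fgEps_5_2, fgEps_5_3, fgEps_5_4, fgEps_5_5, fgEps_5_6, fgEps_5_7, fgEps_6_0, fgEps_6_1, fgEps_6_2, fgEps_6_3,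 fgEps_6_4, fgEps_6_5, fgEps_6_6, fgEps_6_7, fgEps_7_0, fgEps_7_1, fgEps_7_2, fgEps_7_3, fgEps_7_4, fgEps_7_5, fgEps_7_6, fgEps_7_7, mul_zero, zero_mul,
      fd_div 1 2 X (hne 1) (hne 2), Pi.single_apply]
    simp
    field_simp
    ring
  · unfold fgBracket
    simp only [Fin.sum_univ_eight, fgEps_0_0, fgEps_0_1, fgEps_0_2, fgEps_0_3, fgEps_0_4, fgEps_0_5, fgEps_0_6, fgEps_0_7, fgEps_1_0, fgEps_1_1, fgEps_1_2, fgEps_1_3, fgEps_1_4, fgEps_1_5, fgEps_1_6, fgEps_1_7, fgEps_2_0, fgEps_2_1, fgEps_2_2, fgEps_2_3, fgEps_2_4, fgEps_2_5, fgEps_2_6, fgEps_2_7, fgEps_3_0, fgEps_3_1, fgEps_3_2, fgEps_3_3, fgEps_3_4, fgEps_3_5, fgEps_3_6, fgEps_3_7, fgEps_4_0, fgEps_4_1, fgEps_4_2, fgEps_4_3, fgEps_4_4, fgEps_4_5, fgEps_4_6, fgEps_4_7, fgEps_5_0, fgEps_5_1, fgEps_5_2, fgEps_5_3, fgEps_5_4,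 fgEps_5_5, fgEps_5_6, fgEps_5_7, fgEps_6_0, fgEps_6_1, fgEps_6_2, fgEps_6_3, fgEps_6_4, fgEps_6_5, fgEps_6_6, fgEps_6_7, fgEps_7_0, fgEps_7_1, fgEps_7_2, fgEps_7_3, fgEps_7_4, fgEps_7_5, fgEps_7_6, fgEps_7_7, mul_zero, zero_mul, fd_mul, Pi.single_apply]
    simp
    ring
  · unfold fgBracket
    simp only [Fin.sum_univ_eight, fgEps_0_0, fgEps_0_1, fgEps_0_2, fgEps_0_3, fgEps_0_4, fgEps_0_5, fgEps_0_6, fgEps_0_7, fgEps_1_0, fgEps_1_1, fgEps_1_2, fgEps_1_3, fgEps_1_4, fgEps_1_5, fgEps_1_6, fgEps_1_7, fgEps_2_0, fgEps_2_1, fgEps_2_2, fgEps_2_3, fgEps_2_4, fgEps_2_5, fgEps_2_6, fgEps_2_7, fgEps_3_0, fgEps_3_1, fgEps_3_2, fgEps_3_3, fgEps_3_4, fgEps_3_5, fgEps_3_6, fgEps_3_7, fgEps_4_0, fgEps_4_1, fgEps_4_2, fgEps_4_3, fgEps_4_4, fgEps_4_5, fgEps_4_6, fgEps_4_7, fgEps_5_0,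 fgEps_5_1, fgEps_5_2, fgEps_5_3, fgEps_5_4, fgEps_5_5, fgEps_5_6, fgEps_5_7, fgEps_6_0, fgEps_6_1, fgEps_6_2, fgEps_6_3, fgEps_6_4, fgEps_6_5, fgEps_6_6, fgEps_6_7, fgEps_7_0, fgEps_7_1, fgEps_7_2, fgEps_7_3, fgEps_7_4, fgEps_7_5, fgEps_7_6, fgEps_7_7, mul_zero, zero_mul,
      fd_div 3 4 X (hne 3) (hne 4), Pi.single_apply]
    simp
    field_simp
    ring
  · unfold fgBracket
    simp only [Fin.sum_univ_eight, fgEps_0_0, fgEps_0_1, fgEps_0_2, fgEps_0_3, fgEps_0_4, fgEps_0_5, fgEps_0_6, fgEps_0_7, fgEps_1_0, fgEps_1_1, fgEps_1_2, fgEps_1_3, fgEps_1_4, fgEps_1_5, fgEps_1_6, fgEps_1_7, fgEps_2_0, fgEps_2_1, fgEps_2_2, fgEps_2_3, fgEps_2_4, fgEps_2_5, fgEps_2_6, fgEps_2_7, fgEps_3_0, fgEps_3_1, fgEps_3_2, fgEps_3_3, fgEps_3_4, fgEps_3_5, fgEps_3_6, fgEps_3_7, fgEps_4_0, fgEps_4_1,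 fgEps_4_2, fgEps_4_3, fgEps_4_4, fgEps_4_5, fgEps_4_6, fgEps_4_7, fgEps_5_0, fgEps_5_1, fgEps_5_2, fgEps_5_3, fgEps_5_4, fgEps_5_5, fgEps_5_6, fgEps_5_7, fgEps_6_0, fgEps_6_1, fgEps_6_2, fgEps_6_3, fgEps_6_4, fgEps_6_5, fgEps_6_6, fgEps_6_7, fgEps_7_0, fgEps_7_1, fgEps_7_2, fgEps_7_3, fgEps_7_4, fgEps_7_5, fgEps_7_6, fgEps_7_7, mul_zero, zero_mul, fd_mul, Pi.single_apply]
    simp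
    ring
  · unfold fgBracket
    simp only [Fin.sum_univ_eight, fgEps_0_0, fgEps_0_1, fgEps_0_2, fgEps_0_3, fgEps_0_4, fgEps_0_5, fgEps_0_6, fgEps_0_7, fgEps_1_0, fgEps_1_1, fgEps_1_2, fgEps_1_3, fgEps_1_4, fgEps_1_5, fgEps_1_6, fgEps_1_7, fgEps_2_0, fgEps_2_1, fgEps_2_2, fgEps_2_3, fgEps_2_4, fgEps_2_5, fgEps_2_6, fgEps_2_7, fgEps_3_0, fgEps_3_1, fgEps_3_2, fgEps_3_3, fgEps_3_4, fgEps_3_5, fgEps_3_6, fgEps_3_7, fgEps_4_0, fgEps_4_1, fgEps_4_2, fgEps_4_3, fgEps_4_4, fgEps_4_5, fgEps_4_6, fgEps_4_7, fgEps_5_0, fgEps_5_1, fgEps_5_2, fgEps_5_3, fgEps_5_4, fgEps_5_5, fgEps_5_6, fgEps_5_7, fgEps_6_0, fgEps_6_1, fgEps_6_2, fgEps_6_3, fgEps_6_4, fgEps_6_5, fgEps_6_6, fgEps_6_7, fgEps_7_0, fgEps_7_1, fgEps_7_2, fgEps_7_3, fgEps_7_4, fgEps_7_5, fgEps_7_6,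 fgEps_7_7, mul_zero, zero_mul,
      fd_div 0 5 X (hne 0) (hne 5), Pi.single_apply]
    simp
    field_simp
    ring
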